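/- Let m = (p₁,…,pₙ) ∈ 𝕆ⁿ, viewed as an element of the left 𝕆-module 𝕆ⁿ (coordinatewise octonion multiplication). Then the left 𝕆-submodule of 𝕆ⁿ generated by m is isomorphic to 𝕆^{n'}, where n' is the dimension of the real linear span of {p₁,…,pₙ} inside 𝕆 ≅ ℝ⁸. -/

import Mathlib

noncomputable section

open Quaternion

/-- The octonions, via the Cayley–Dickson construction on the quaternions. -/
def Octonion : Type := ℍ[ℝ] × ℍ[ℝ]

namespace Octonion

instance : AddCommGroup Octonion := inferInstanceAs (AddCommGroup (ℍ[ℝ] × ℍ[ℝ]))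
instance : Module ℝ Octonion := inferInstanceAs (Module ℝ (ℍ[ℝ] × ℍ[ℝ]))

instance : One Octonion := ⟨((1 : ℍ[ℝ]), (0 : ℍ[ℝ]))⟩
instance : Mul Octonion :=
  ⟨fun x y => (x.1 * y.1 - star y.2 * x.2, y.2 * x.1 + x.2 * star y.1)⟩
/-- Octonionic conjugation. -/
instance : Star Octonion := ⟨fun x => (star x.1, -x.2)⟩

/-- The associator `[a,b,c] = (ab)c - a(bc)`. -/
def assoc (a b c : Octonion) : Octonion := a * b * c - a * (b * c)

/-- The standard imaginary units `e 0 = e₁, …, e 6 = e₇`. -/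
def e : Fin 7 → Octonion
  | 0 => ((⟨0,1,0,0⟩ : ℍ[ℝ]), 0)
  | 1 => ((⟨0,0,1,0⟩ : ℍ[ℝ]), 0)
  | 2 => ((⟨0,0,0,1⟩ : ℍ[ℝ]), 0)
  | 3 => (0, (1 : ℍ[ℝ]))
  | 4 => (0, (⟨0,1,0,0⟩ : ℍ[ℝ]))
  | 5 => (0, (⟨0,0,1,0⟩ : ℍ[ℝ]))
  | 6 => (0, (⟨0,0,0,1⟩ : ℍ[ℝ]))

end Octonion

/-- A left `𝕆`-module: a real vector space with an `ℝ`-bilinear octonion action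
satisfying `1 • m = m` and the alternating rule. -/
structure LeftOModule (M : Type) [AddCommGroup M] [Module ℝ M] where
  smul : Octonion →ₗ[ℝ] M →ₗ[ℝ] M
  one_smul : ∀ m : M, smul 1 m = m
  alt : ∀ (p q : Octonion) (m : M),
    smul (p * q) m - smul p (smul q m) = -(smul (q * p) m - smul q (smul p m))

/-- An `𝕆`-bimodule: compatible left and right `𝕆`-module structures with
`[p,q,m] = [q,m,p] = [m,p,q]`.  Here `l p m` is `p * m` and `r p m` is `m * p`. -/
structure OBimodule (M : Type) [AddCommGroup M] [Module ℝ M] where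
  l : Octonion →ₗ[ℝ] M →ₗ[ℝ] M
  r : Octonion →ₗ[ℝ] M →ₗ[ℝ] M
  one_l : ∀ m : M, l 1 m = m
  one_r : ∀ m : M, r 1 m = m
  /-- left alternating rule `[p,q,m] = -[q,p,m]` -/
  alt_l : ∀ (p q : Octonion) (m : M),
    l (p * q) m - l p (l q m) = -(l (q * p) m - l q (l p m))
  /-- right alternating rule `[m,p,q] = -[m,q,p]` -/
  alt_r : ∀ (p q : Octonion) (m : M),
    r q (r p m) - r (p * q) m = -(r p (r q m) - r (q * p) m)
  /-- `[p,q,m] = [q,m,p]` -/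
  comp_lm : ∀ (p q : Octonion) (m : M),
    l (p * q) m - l p (l q m) = r p (l q m) - l q (r p m)
  /-- `[p,q,m] = [m,p,q]` -/
  comp_rm : ∀ (p q : Octonion) (m : M),
    l (p * q) m - l p (l q m) = r q (r p m) - r (p * q) m


/-! Left multiplications generate `End_ℝ(𝕆)` as an `ℝ`-algebra: three products of three left
multiplications by imaginary units are commuting sign changes of the coordinates, and averaging
over the group they generate gives the projection `x ↦ Re x • 1`. Since `(b, x) ↦ Re (b x)` is
nondegenerate, composing this projection with left multiplications on both sides gives every
rank-one map. So the submodule generated by `p` is `{(A p₁, …, A pₙ) | A ∈ End_ℝ(𝕆)}`, and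
`A ↦ A|_{span p}` identifies it with `Hom_ℝ(span p, 𝕆) ≅ 𝕆^{n'}`, compatibly with `𝕆`. -/

section Closure

variable {K A M Q : Type*} [CommSemiring K] [Semiring A] [Algebra K A] [AddCommMonoid M]
  [Module K M] [Module A M] [IsScalarTower K A M]

theorem Submodule.sInf_stable_eq_restrictScalars_span_singleton {L : Q → A}
    (hL : Algebra.adjoin K (Set.range L) = ⊤) (m : M) :
    sInf {S : Submodule K M | m ∈ S ∧ ∀ q, ∀ x ∈ S, L q • x ∈ S} =
      (A ∙ m).restrictScalars K := by
  set N := sInf {S : Submodule K M | m ∈ S ∧ ∀ q, ∀ x ∈ S, L q • x ∈ S}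
  refine le_antisymm
    (sInf_le ⟨mem_span_singleton_self m, fun q x hx => (A ∙ m).smul_mem (L q) hx⟩) ?_
  have hm : m ∈ N := mem_sInf.2 fun S hS => hS.1
  have hN : ∀ q, ∀ x ∈ N, L q • x ∈ N := fun q x hx =>
    mem_sInf.2 fun S hS => hS.2 q x (mem_sInf.1 hx S hS)
  have hA : ∀ a : A, ∀ x ∈ N, a • x ∈ N := by
    intro a
    induction (hL ▸ Algebra.mem_top : a ∈ Algebra.adjoin K (Set.range L)) using
      Algebra.adjoin_induction with
    | mem a ha => obtain ⟨q, rfl⟩ := ha; exact hN q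
    | algebraMap r => exact fun x hx => by rw [algebraMap_smul]; exact N.smul_mem r hx
    | add a b _ _ ha hb => exact fun x hx => by rw [add_smul]; exact N.add_mem (ha x hx) (hb x hx)
    | mul a b _ _ ha hb => exact fun x hx => by rw [mul_smul]; exact ha _ (hb x hx)
  intro x hx
  obtain ⟨a, rfl⟩ := mem_span_singleton.1 hx
  exact hA a m hm

end Closure

section Cyclic

variable (K : Type*) {V ι : Type*} [Field K] [AddCommGroup V] [Module K V] (p : ι → V)

namespace Submodule

def spanEval : (span K (Set.range p) →ₗ[K] V) →ₗ[Module.End K V] (ι → V) where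
  toFun f i := f ⟨p i, subset_span (Set.mem_range_self i)⟩
  map_add' _ _ := rfl
  map_smul' _ _ := rfl

theorem spanEval_injective : Function.Injective (spanEval K p) := by
  rw [← LinearMap.ker_eq_bot, LinearMap.ker_eq_bot']
  intro f hf
  refine LinearMap.ext_on (span_span_coe_preimage (s := Set.range p)) ?_
  rintro ⟨_, _⟩ ⟨i, rfl⟩
  exact congrFun hf i

theorem range_spanEval : LinearMap.range (spanEval K p) = Module.End K V ∙ p := by
  refine le_antisymm ?_ ((span_singleton_le_iff_mem _ _).2 ⟨(span K (Set.range p)).subtype, rfl⟩)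
  rintro _ ⟨f, rfl⟩
  obtain ⟨g, rfl⟩ := LinearMap.exists_extend f
  exact mem_span_singleton.2 ⟨g, rfl⟩

noncomputable def spanSingletonEquivPi {ι' : Type*} (b : Module.Basis ι' K (span K (Set.range p))) :
    ↥(Module.End K V ∙ p) ≃ₗ[Module.End K V] (ι' → V) :=
  (LinearEquiv.ofEq _ _ (range_spanEval K p).symm).trans <|
    (LinearEquiv.ofInjective _ (spanEval_injective K p)).symm.trans (b.constr (Module.End K V)).symm

end Submodule

end Cyclic

theorem Subalgebra.eq_top_of_smulRight_mem {K V : Type*} [CommRing K] [AddCommGroup V] [Module K V]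
    [Module.Free K V] [Module.Finite K V] (S : Subalgebra K (Module.End K V))
    (h : ∀ (f : Module.Dual K V) (v : V), f.smulRight v ∈ S) : S = ⊤ := by
  refine eq_top_iff.2 fun A _ => ?_
  let c := Module.Free.chooseBasis K V
  have hA : A = ∑ j, (c.coord j).smulRight (A (c j)) := c.ext fun i => by
    simp [Finsupp.single_apply]
  rw [hA]
  exact Subalgebra.sum_mem _ fun j _ => h _ _

namespace Octonion

-- `Octonion` is a plain `def`, so `x.1` is ill-typed up to reducible unfolding and simp lemmas
-- stated with it do not fire; `mk`, `fst` and `snd` give a stable interface to the pairs.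
def mk (a b : ℍ[ℝ]) : Octonion := (a, b)

def fst (x : Octonion) : ℍ[ℝ] := Prod.fst (β := ℍ[ℝ]) x

def snd (x : Octonion) : ℍ[ℝ] := Prod.snd (α := ℍ[ℝ]) x

@[ext] theorem ext {x y : Octonion} (h₁ : x.fst = y.fst) (h₂ : x.snd = y.snd) : x = y :=
  Prod.ext h₁ h₂

section Components

variable (a b : ℍ[ℝ]) (r : ℝ) (x y : Octonion)

@[simp] theorem fst_mk : (mk a b).fst = a := rfl
@[simp] theorem snd_mk : (mk a b).snd = b := rfl
@[simp] theorem fst_add : (x + y).fst = x.fst + y.fst := rfl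
@[simp] theorem snd_add : (x + y).snd = x.snd + y.snd := rfl
@[simp] theorem fst_smul : (r • x).fst = r • x.fst := rfl
@[simp] theorem snd_smul : (r • x).snd = r • x.snd := rfl
@[simp] theorem fst_mul : (x * y).fst = x.fst * y.fst - star y.snd * x.snd := rfl
@[simp] theorem snd_mul : (x * y).snd = y.snd * x.fst + x.snd * star y.fst := rfl
@[simp] theorem fst_one : (1 : Octonion).fst = 1 := rfl
@[simp] theorem snd_one : (1 : Octonion).snd = 0 := rfl
@[simp] theorem fst_star : (star x).fst = star x.fst := rfl
@[simp] theorem snd_star : (star x).snd = -x.snd := rfl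

end Components

protected theorem add_mul (x y z : Octonion) : (x + y) * z = x * z + y * z := by
  ext <;> simp <;> noncomm_ring

protected theorem mul_add (x y z : Octonion) : x * (y + z) = x * y + x * z := by
  ext <;> simp <;> noncomm_ring

protected theorem smul_mul (r : ℝ) (x y : Octonion) : (r • x) * y = r • (x * y) := by
  ext <;> simp [smul_sub, smul_add]

protected theorem mul_smul (r : ℝ) (x y : Octonion) : x * (r • y) = r • (x * y) := by
  ext <;> simp [smul_sub, smul_add]

protected theorem mul_one (x : Octonion) : x * 1 = x := by
  ext <;> simp

def mulLeft : Octonion →ₗ[ℝ] Module.End ℝ Octonion :=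
  LinearMap.mk₂ ℝ (· * ·) Octonion.add_mul Octonion.smul_mul Octonion.mul_add
    Octonion.mul_smul

@[simp] theorem mulLeft_apply (q x : Octonion) : mulLeft q x = q * x := rfl

def re : Octonion →ₗ[ℝ] ℝ where
  toFun x := x.fst.re
  map_add' _ _ := rfl
  map_smul' _ _ := rfl

@[simp] theorem re_apply (x : Octonion) : re x = x.fst.re := rfl

theorem e0_mul_e2_mul_e1_mul (x : Octonion) : e 0 * (e 2 * (e 1 * x)) = mk x.fst (-x.snd) := by
  ext : 1 <;> apply Quaternion.ext <;>
    simp only [fst_mul, snd_mul, Quaternion.re_mul, Quaternion.imI_mul, Quaternion.imJ_mul,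
      Quaternion.imK_mul, Quaternion.re_sub, Quaternion.imI_sub, Quaternion.imJ_sub,
      Quaternion.imK_sub, Quaternion.re_add, Quaternion.imI_add, Quaternion.imJ_add,
      Quaternion.imK_add, Quaternion.re_star, Quaternion.imI_star, Quaternion.imJ_star,
      Quaternion.imK_star] <;>
    simp [e, fst, snd, mk]

theorem e0_mul_e4_mul_e3_mul (x : Octonion) :
    e 0 * (e 4 * (e 3 * x)) = mk ⟨x.fst.re, x.fst.imI, -x.fst.imJ, -x.fst.imK⟩
      ⟨x.snd.re, x.snd.imI, -x.snd.imJ, -x.snd.imK⟩ := by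
  ext : 1 <;> apply Quaternion.ext <;>
    simp only [fst_mul, snd_mul, Quaternion.re_mul, Quaternion.imI_mul, Quaternion.imJ_mul,
      Quaternion.imK_mul, Quaternion.re_sub, Quaternion.imI_sub, Quaternion.imJ_sub,
      Quaternion.imK_sub, Quaternion.re_add, Quaternion.imI_add, Quaternion.imJ_add,
      Quaternion.imK_add, Quaternion.re_star, Quaternion.imI_star, Quaternion.imJ_star,
      Quaternion.imK_star] <;>
    simp [e, fst, snd, mk]

theorem e1_mul_e5_mul_e3_mul (x : Octonion) :
    e 1 * (e 5 * (e 3 * x)) = mk ⟨x.fst.re, -x.fst.imI, x.fst.imJ, -x.fst.imK⟩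
      ⟨x.snd.re, -x.snd.imI, x.snd.imJ, -x.snd.imK⟩ := by
  ext : 1 <;> apply Quaternion.ext <;>
    simp only [fst_mul, snd_mul, Quaternion.re_mul, Quaternion.imI_mul, Quaternion.imJ_mul,
      Quaternion.imK_mul, Quaternion.re_sub, Quaternion.imI_sub, Quaternion.imJ_sub,
      Quaternion.imK_sub, Quaternion.re_add, Quaternion.imI_add, Quaternion.imJ_add,
      Quaternion.imK_add, Quaternion.re_star, Quaternion.imI_star, Quaternion.imJ_star,
      Quaternion.imK_star] <;>
    simp [e, fst, snd, mk]

theorem re_smulRight_one_eq :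
    re.smulRight 1 = (8 : ℝ)⁻¹ • ((1 + mulLeft (e 0) * mulLeft (e 2) * mulLeft (e 1)) *
      (1 + mulLeft (e 0) * mulLeft (e 4) * mulLeft (e 3)) *
      (1 + mulLeft (e 1) * mulLeft (e 5) * mulLeft (e 3))) := by
  ext x : 1
  simp only [LinearMap.smul_apply, Module.End.mul_apply, LinearMap.add_apply,
    Module.End.one_apply, mulLeft_apply, LinearMap.smulRight_apply, re_apply,
    e0_mul_e2_mul_e1_mul, e0_mul_e4_mul_e3_mul, e1_mul_e5_mul_e3_mul]
  ext : 1 <;> apply Quaternion.ext <;>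
    simp <;>
    -- the quaternion literals have type `ℍ[ℝ,-1,0,-1]`, on which `fst_mk` and `snd_mk` do not fire
    dsimp only [mk, fst, snd] <;> ring

instance : FiniteDimensional ℝ Octonion := inferInstanceAs (FiniteDimensional ℝ (ℍ[ℝ] × ℍ[ℝ]))

def traceForm : Octonion →ₗ[ℝ] Module.Dual ℝ Octonion := mulLeft.compr₂ re

@[simp] theorem traceForm_apply (b x : Octonion) : traceForm b x = re (b * x) := rfl

theorem re_mul_star_self (b : Octonion) :
    re (b * star b) = Quaternion.normSq b.fst + Quaternion.normSq b.snd := by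
  simp [Quaternion.self_mul_star, Quaternion.star_mul_self]

theorem traceForm_injective : Function.Injective traceForm := by
  rw [← LinearMap.ker_eq_bot, LinearMap.ker_eq_bot']
  intro b hb
  have h : re (b * star b) = 0 := LinearMap.congr_fun hb (star b)
  rw [re_mul_star_self] at h
  have h₁ := Quaternion.normSq_nonneg (a := b.fst)
  have h₂ := Quaternion.normSq_nonneg (a := b.snd)
  ext : 1
  · exact Quaternion.normSq_eq_zero.1 (by linarith)
  · exact Quaternion.normSq_eq_zero.1 (by linarith)

theorem traceForm_surjective : Function.Surjective traceForm :=
  (LinearMap.injective_iff_surjective_of_finrank_eq_finrank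
    (Subspace.dual_finrank_eq (V := Octonion)).symm).1 traceForm_injective

theorem adjoin_range_mulLeft : Algebra.adjoin ℝ (Set.range mulLeft) = ⊤ := by
  set 𝒜 := Algebra.adjoin ℝ (Set.range mulLeft)
  have hL : ∀ q, mulLeft q ∈ 𝒜 := fun q => Algebra.subset_adjoin ⟨q, rfl⟩
  have hre : re.smulRight 1 ∈ 𝒜 := by
    rw [re_smulRight_one_eq]
    refine Subalgebra.smul_mem _ (mul_mem (mul_mem ?_ ?_) ?_) _ <;>
      exact add_mem (one_mem _) (mul_mem (mul_mem (hL _) (hL _)) (hL _))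
  refine Subalgebra.eq_top_of_smulRight_mem 𝒜 fun f v => ?_
  obtain ⟨b, rfl⟩ := traceForm_surjective f
  have : (traceForm b).smulRight v = mulLeft v * re.smulRight 1 * mulLeft b := by
    refine LinearMap.ext fun x => ?_
    simp [Octonion.mul_one]
  rw [this]
  exact mul_mem (mul_mem (hL v) hre) (hL b)

end Octonion

/-- The left `𝕆`-submodule of `𝕆ⁿ` generated by `m = (p₁,…,pₙ)` is isomorphic
to `𝕆^{n'}`, where `n'` is the real rank of `{p₁,…,pₙ}` inside `𝕆 ≅ ℝ⁸`. -/
theorem cyclic_submodule_of_pow (n : ℕ) (p : Fin n → Octonion) :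
    let N : Submodule ℝ (Fin n → Octonion) :=
      sInf {S : Submodule ℝ (Fin n → Octonion) |
        p ∈ S ∧ ∀ q : Octonion, ∀ x ∈ S, (fun i => q * x i) ∈ S}
    let n' : ℕ := Module.finrank ℝ (Submodule.span ℝ (Set.range p))
    ∃ φ : N ≃ₗ[ℝ] (Fin n' → Octonion),
      ∀ (q : Octonion) (x : N)
        (hx : (fun i => q * (x : Fin n → Octonion) i) ∈ N),
        φ ⟨fun i => q * (x : Fin n → Octonion) i, hx⟩ = fun i => q * φ x i := by
  intro N n'
  have hN : N = (Module.End ℝ Octonion ∙ p).restrictScalars ℝ :=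
    Submodule.sInf_stable_eq_restrictScalars_span_singleton Octonion.adjoin_range_mulLeft p
  let e := Submodule.spanSingletonEquivPi ℝ p (Module.finBasis ℝ _)
  refine ⟨(LinearEquiv.ofEq _ _ hN).trans (e.restrictScalars ℝ), fun q x hx => ?_⟩
  exact e.map_smul (Octonion.mulLeft q) ⟨x, hN.le x.2⟩
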